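/- Let n ≥ 1 and let σ and τ be two fixed-point-free involutions of Fin (2n) (perfect matchings of 2n points on a circle in their natural circular order), both noncrossing. Define, for p ∈ Fin (2n), the based order <_p on Fin (2n) ∖ {p} by q <_p r iff (q − p) mod 2n < (r − p) mod 2n as natural numbers in {1, …, 2n−1}. If σ = τ fails, then the set {p : τ(p) >_p σ(p)} and the set {p : τ(p) <_p σ(p)} are both nonempty. -/
import Mathlib


/-- Cyclic distance from `p` to `q` on `m` points: `(q - p) mod m` computed in
the naturals. -/
def cdist (m : ℕ) (p q : Fin m) : ℕ := (q.val + m - p.val) % m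

/-- `x` lies strictly between `a` and `b` in circular order. -/
def CircBtw (m : ℕ) (a b x : Fin m) : Prop :=
  0 < cdist m a x ∧ cdist m a x < cdist m a b

/-- A matching (involution) `σ` is noncrossing if no two of its chords
interleave on the circle: never exactly one of `c, σ c` lies in the cyclic
open interval from `a` to `σ a`. -/
def Noncrossing {m : ℕ} (σ : Equiv.Perm (Fin m)) : Prop :=
  ∀ a c : Fin m, ¬ Xor' (CircBtw m a (σ a) c) (CircBtw m a (σ a) (σ c))

lemma cdist_cases {m : ℕ} (p q : Fin m) :
    cdist m p q = if p.val ≤ q.val then q.val - p.val else q.val + m - p.val := by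
  have hp := p.isLt
  have hq := q.isLt
  unfold cdist
  split_ifs with h
  · have h1 : q.val + m - p.val = (q.val - p.val) + m := by omega
    rw [h1, Nat.add_mod_right, Nat.mod_eq_of_lt (by omega)]
  · rw [Nat.mod_eq_of_lt (by omega)]

lemma cdist_lt' {m : ℕ} (p q : Fin m) : cdist m p q < m := by
  have hp := p.isLt; have hq := q.isLt
  rw [cdist_cases]; split_ifs <;> omega

lemma cdist_eq_zero {m : ℕ} {p q : Fin m} : cdist m p q = 0 ↔ p = q := by
  have hp := p.isLt; have hq := q.isLt
  rw [cdist_cases, Fin.ext_iff]; split_ifs <;> omega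

lemma cdist_inj {m : ℕ} {p q r : Fin m} (h : cdist m p q = cdist m p r) : q = r := by
  have hp := p.isLt; have hq := q.isLt; have hr := r.isLt
  rw [cdist_cases, cdist_cases] at h
  rw [Fin.ext_iff]
  split_ifs at h <;> omega

lemma cdist_add {m : ℕ} {p x y : Fin m} (h : cdist m p x ≤ cdist m p y) :
    cdist m x y = cdist m p y - cdist m p x := by
  have hp := p.isLt; have hx := x.isLt; have hy := y.isLt
  simp only [cdist_cases] at h ⊢
  split_ifs at h ⊢ <;> omega

lemma cdist_rev {m : ℕ} {p q : Fin m} (h : p ≠ q) : cdist m q p = m - cdist m p q := by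
  have hp := p.isLt; have hq := q.isLt
  have hpq : p.val ≠ q.val := fun hh => h (Fin.ext hh)
  simp only [cdist_cases]
  split_ifs <;> omega

lemma exists_smaller (n : ℕ)
    (σ τ : Equiv.Perm (Fin (2 * n)))
    (hσinv : Function.Involutive σ) (hσfpf : ∀ p, σ p ≠ p)
    (hτinv : Function.Involutive τ) (hτfpf : ∀ p, τ p ≠ p)
    (hσnc : Noncrossing σ) (hτnc : Noncrossing τ)
    (hne : σ ≠ τ) :
    ∃ p, cdist (2 * n) p (σ p) < cdist (2 * n) p (τ p) := by
  by_contra hcon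
  push_neg at hcon
  have hEx : ∃ p : Fin (2 * n), σ p ≠ τ p := by
    by_contra h; push_neg at h; exact hne (Equiv.ext h)
  obtain ⟨p, hpmem, hmin⟩ := Finset.exists_min_image
    (Finset.univ.filter fun p : Fin (2 * n) => σ p ≠ τ p)
    (fun p => cdist (2 * n) p (τ p))
    (by obtain ⟨p, hp⟩ := hEx
        exact ⟨p, Finset.mem_filter.mpr ⟨Finset.mem_univ _, hp⟩⟩)
  have hpS : σ p ≠ τ p := (Finset.mem_filter.mp hpmem).2
  have hmin' : ∀ x : Fin (2 * n), σ x ≠ τ x →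
      cdist (2 * n) p (τ p) ≤ cdist (2 * n) x (τ x) := by
    intro x hx
    exact hmin x (Finset.mem_filter.mpr ⟨Finset.mem_univ _, hx⟩)
  have strict : ∀ x : Fin (2 * n), σ x ≠ τ x →
      cdist (2 * n) x (τ x) < cdist (2 * n) x (σ x) := by
    intro x hx
    exact lt_of_le_of_ne (hcon x) (fun h => hx ((cdist_inj h).symm))
  have hd0 : 0 < cdist (2 * n) p (τ p) := by
    rcases Nat.eq_zero_or_pos (cdist (2 * n) p (τ p)) with h | h
    · exact absurd (cdist_eq_zero.mp h).symm (hτfpf p)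
    · exact h
  have hdσ : cdist (2 * n) p (τ p) < cdist (2 * n) p (σ p) := strict p hpS
  -- all points strictly inside (p, τ p) have the same partner under σ and τ
  have agree : ∀ x : Fin (2 * n), 0 < cdist (2 * n) p x →
      cdist (2 * n) p x < cdist (2 * n) p (τ p) → σ x = τ x := by
    intro x hx1 hx2
    have hbtw : CircBtw (2 * n) p (τ p) x := ⟨hx1, hx2⟩
    have hτx : CircBtw (2 * n) p (τ p) (τ x) := by
      by_contra hB
      exact (hτnc p x) (Or.inl ⟨hbtw, hB⟩)
    obtain ⟨h1, h2⟩ := hτx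
    have hne' : x ≠ τ x := fun h => hτfpf x h.symm
    have he12 : cdist (2 * n) p x ≠ cdist (2 * n) p (τ x) := fun h => hne' (cdist_inj h)
    rcases lt_or_gt_of_ne he12 with hlt | hgt
    · have hc : cdist (2 * n) x (τ x) = cdist (2 * n) p (τ x) - cdist (2 * n) p x :=
        cdist_add (le_of_lt hlt)
      by_contra hxx
      have := hmin' x hxx
      omega
    · have hc : cdist (2 * n) (τ x) x = cdist (2 * n) p x - cdist (2 * n) p (τ x) :=
        cdist_add (le_of_lt hgt)
      have hag : σ (τ x) = τ (τ x) := by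
        by_contra hxx
        have hmm := hmin' (τ x) hxx
        rw [hτinv x] at hmm
        omega
      have hsx : σ (τ x) = x := by rw [hag, hτinv]
      calc σ x = σ (σ (τ x)) := by rw [hsx]
        _ = τ x := hσinv _
  have hq_btw : CircBtw (2 * n) p (σ p) (τ p) := ⟨hd0, hdσ⟩
  have hσq : CircBtw (2 * n) p (σ p) (σ (τ p)) := by
    by_contra hB
    exact (hσnc p (τ p)) (Or.inl ⟨hq_btw, hB⟩)
  obtain ⟨hs1, hs2⟩ := hσq
  have hd_lt : cdist (2 * n) p (τ p) < cdist (2 * n) p (σ (τ p)) := by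
    rcases lt_trichotomy (cdist (2 * n) p (σ (τ p))) (cdist (2 * n) p (τ p)) with h | h | h
    · have hag := agree (σ (τ p)) hs1 h
      have hτσq : τ (σ (τ p)) = τ p := by rw [← hag, hσinv]
      have h2 : σ (τ p) = τ (τ p) := by
        conv_rhs => rw [← hτσq, hτinv]
      rw [h2, hτinv p] at hs1
      have : cdist (2 * n) p p = 0 := cdist_eq_zero.mpr rfl
      omega
    · exact absurd (cdist_inj h) (hσfpf (τ p))
    · exact h
  have h7 : cdist (2 * n) (τ p) (σ (τ p)) =
      cdist (2 * n) p (σ (τ p)) - cdist (2 * n) p (τ p) := cdist_add (le_of_lt hd_lt)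
  have hpq : p ≠ τ p := fun h => hτfpf p h.symm
  have h8 : cdist (2 * n) (τ p) p = 2 * n - cdist (2 * n) p (τ p) := cdist_rev hpq
  have hH := hcon (τ p)
  rw [hτinv p] at hH
  have hlt_m : cdist (2 * n) p (σ (τ p)) < 2 * n := cdist_lt' _ _
  have hd_lt_m : cdist (2 * n) p (τ p) < 2 * n := cdist_lt' _ _
  omega

/-- for two distinct noncrossing perfect matchings `σ, τ` of
`Fin (2n)`, the set of points where `τ`'s partner is strictly larger than
`σ`'s partner in the based order `<_p` (compared via cyclic distance from `p`)
and the set where it is strictly smaller are both nonempty. -/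
theorem distinct_noncrossing_matchings_both_sets_nonempty
    (n : ℕ) (hn : 1 ≤ n)
    (σ τ : Equiv.Perm (Fin (2 * n)))
    (hσinv : Function.Involutive σ) (hσfpf : ∀ p, σ p ≠ p)
    (hτinv : Function.Involutive τ) (hτfpf : ∀ p, τ p ≠ p)
    (hσnc : Noncrossing σ) (hτnc : Noncrossing τ)
    (hne : σ ≠ τ) :
    {p : Fin (2 * n) | cdist (2 * n) p (σ p) < cdist (2 * n) p (τ p)}.Nonempty ∧
    {p : Fin (2 * n) | cdist (2 * n) p (τ p) < cdist (2 * n) p (σ p)}.Nonempty := by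
  constructor
  · obtain ⟨p, hp⟩ := exists_smaller n σ τ hσinv hσfpf hτinv hτfpf hσnc hτnc hne
    exact ⟨p, hp⟩
  · obtain ⟨p, hp⟩ := exists_smaller n τ σ hτinv hτfpf hσinv hσfpf hτnc hσnc (Ne.symm hne)
    exact ⟨p, hp⟩
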